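/- Let f be a nonnegative, radially decreasing C¹ function on ℝ^d and let α ∈ (0, d). Then for any ε₀ ∈ (0, 1/4] and all r > 0, −∂_r(|·|^{−α} * f)(r) ≳_{d,α,ε₀} [f((2/3)r) − f(r/(2ε₀))] r^{d−1−α}, with the implied constant uniformly bounded for (α, ε₀) in compact subsets of (0, d) × (0, 1/4]. In particular, if f vanishes at infinity and is not identically zero, then |·|^{−α} * f is strictly radially decreasing. -/

import Mathlib

open MeasureTheory Metric Set Filter ENNReal
noncomputable section

abbrev Euc (d : ℕ) := EuclideanSpace ℝ (Fin d)

def rieszConv (d : ℕ) (α : ℝ) (f : Euc d → ℝ) (x : Euc d) : ℝ :=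
  ∫ y : Euc d, ‖x - y‖ ^ (-α) * f y

/-!
Write `I = rieszConv d α f` and let `y*` be the mirror image of `y` in the hyperplane
`⟪y, e⟫ = (r + t) / 2`, which exchanges `r • e` and `t • e`. Folding the integrals along this
hyperplane gives
`2 (I (r • e) - I (t • e)) = ∫ (‖r • e - y‖ ^ (-α) - ‖t • e - y‖ ^ (-α)) (f y - f y*) dy`.
The folded integrand is invariant under `y ↦ y*`, and on the side of `r • e` both factors are
nonnegative, since `y*` is farther from the origin than `y`. So `I (r • e) - I (t • e)` is at
least half the integral of the folded integrand over any set.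

For the derivative bound take the balls of radius `r / 4` centred on `-ℝ₊ e` at distance
`s k = (2/3 + 3k/2) r`, `k < N`. There the kernel factor is `≳ (t - r) r ^ (-α - 1)` and the
second factor is at least `g (s k) - g (s (k + 1))`, which telescopes to
`g (2r/3) - g (s N) ≥ g (2r/3) - g (r / (2 ε₀))` once `N ε₀ ≥ 1`. For strict monotonicity one
ball on which `g` drops strictly suffices; it exists because `f` is continuous, not identically
zero, and `g` tends to `0`.
-/

open scoped RealInnerProductSpace Topology

namespace RieszPotential

lemma mul_rpow_mul_sub_le_rpow_neg_sub_rpow_neg {α a b : ℝ} (hα : 0 ≤ α) (ha : 0 < a)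
    (hab : a ≤ b) : α * b ^ (-α - 1) * (b - a) ≤ a ^ (-α) - b ^ (-α) := by
  rcases hab.eq_or_lt with rfl | hab
  · simp
  have hderiv : ∀ x ∈ Ioo a b, HasDerivAt (fun x : ℝ => x ^ (-α)) (-α * x ^ (-α - 1)) x :=
    fun x hx => Real.hasDerivAt_rpow_const (Or.inl (ha.trans hx.1).ne')
  have hcont : ContinuousOn (fun x : ℝ => x ^ (-α)) (Icc a b) := fun x hx =>
    (Real.continuousAt_rpow_const x _ (Or.inl (ha.trans_le hx.1).ne')).continuousWithinAt
  obtain ⟨c, hc, hslope⟩ := exists_hasDerivAt_eq_slope _ _ hab hcont hderiv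
  rw [eq_div_iff (sub_pos.2 hab).ne'] at hslope
  have hbc : b ^ (-α - 1) ≤ c ^ (-α - 1) :=
    Real.rpow_le_rpow_of_nonpos (ha.trans hc.1) hc.2.le (by linarith)
  nlinarith [mul_le_mul_of_nonneg_left hbc hα, sub_pos.2 hab]

lemma le_neg_of_hasDerivAt_of_eventually {φ : ℝ → ℝ} {D B r : ℝ} (hD : HasDerivAt φ D r)
    (h : ∀ᶠ t in 𝓝[>] r, (t - r) * B ≤ φ r - φ t) : B ≤ -D := by
  have hslope : Tendsto (slope φ r) (𝓝[>] r) (𝓝 D) :=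
    (hasDerivAt_iff_tendsto_slope.1 hD).mono_left (nhdsWithin_mono r fun _ ht => ne_of_gt ht)
  have hle : D ≤ -B := le_of_tendsto hslope <| by
    filter_upwards [h, self_mem_nhdsWithin] with t ht hrt
    rw [slope_def_field, div_le_iff₀ (sub_pos.2 hrt)]
    linarith
  linarith

lemma exists_lt_of_tendsto_atTop_zero {g : ℝ → ℝ} (hg : Tendsto g atTop (𝓝 0)) {s₀ h : ℝ}
    (hs₀ : 0 < g s₀) (hh : 0 < h) : ∃ ρ, s₀ ≤ ρ ∧ g (ρ + h) < g ρ := by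
  by_contra! hcon
  have hmono : ∀ n : ℕ, s₀ ≤ s₀ + n * h ∧ g s₀ ≤ g (s₀ + n * h) := by
    intro n
    induction n with
    | zero => simp
    | succ n ih =>
      rw [Nat.cast_succ, add_one_mul, ← add_assoc]
      exact ⟨by linarith [ih.1], ih.2.trans (hcon _ ih.1)⟩
  have hlim : Tendsto (fun n : ℕ => g (s₀ + n * h)) atTop (𝓝 0) :=
    hg.comp (tendsto_atTop_add_const_left _ _ (tendsto_natCast_atTop_atTop.atTop_mul_const hh))
  linarith [ge_of_tendsto' hlim fun n => (hmono n).2]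

lemma exists_pos_radius_pos {E : Type*} [NormedAddCommGroup E] [NormedSpace ℝ E] [Nontrivial E]
    {f : E → ℝ} {g : ℝ → ℝ} (hf : Continuous f) (hf0 : ∀ x, 0 ≤ f x)
    (hfg : ∀ x, f x = g ‖x‖) (hne : ∃ x, f x ≠ 0) : ∃ s, 0 < s ∧ 0 < g s := by
  obtain ⟨x₀, hx₀⟩ := hne
  obtain ⟨x, hx, hx0⟩ := (dense_compl_singleton (0 : E)).inter_open_nonempty {x | 0 < f x}
    (isOpen_lt continuous_const hf) ⟨x₀, (hf0 x₀).lt_of_ne' hx₀⟩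
  exact ⟨‖x‖, norm_pos_iff.2 hx0, hfg x ▸ hx⟩

lemma sum_mul_measureReal_le_integral {X : Type*} [MeasurableSpace X] {μ : Measure X}
    {W : X → ℝ} (hW : Integrable W μ) (hW0 : 0 ≤ᵐ[μ] W) {A : ℕ → Set X}
    (hA : ∀ k, MeasurableSet (A k)) (hAfin : ∀ k, μ (A k) ≠ ∞)
    (hdisj : Pairwise (Function.onFun Disjoint A)) {c : ℕ → ℝ} {N : ℕ}
    (hc : ∀ k < N, ∀ x ∈ A k, c k ≤ W x) :
    ∑ k ∈ Finset.range N, c k * μ.real (A k) ≤ ∫ x, W x ∂μ :=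
  calc ∑ k ∈ Finset.range N, c k * μ.real (A k)
      ≤ ∑ k ∈ Finset.range N, ∫ x in A k, W x ∂μ := Finset.sum_le_sum fun k hk =>
        setIntegral_ge_of_const_le_real (hA k) (hAfin k) (hc k (Finset.mem_range.1 hk))
          hW.integrableOn
    _ = ∫ x in ⋃ k ∈ Finset.range N, A k, W x ∂μ :=
        (integral_biUnion_finset _ (fun k _ => hA k) (hdisj.set_pairwise _)
          fun _ _ => hW.integrableOn).symm
    _ ≤ ∫ x, W x ∂μ := setIntegral_le_integral hW hW0

section InnerProductSpace

variable {E : Type*} [NormedAddCommGroup E] [InnerProductSpace ℝ E] {e y : E}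
  {α m r t δ ρ h B : ℝ} {f : E → ℝ} {g : ℝ → ℝ}

/-- The reflection in the hyperplane `⟪y, e⟫ = m`, when `‖e‖ = 1`. -/
def hyperplaneReflection (e : E) (m : ℝ) (y : E) : E :=
  (2 * m) • e + (ℝ ∙ e)ᗮ.reflection y

lemma reflection_orthogonal_span_smul (s : ℝ) : (ℝ ∙ e)ᗮ.reflection (s • e) = -(s • e) :=
  Submodule.reflection_mem_subspace_orthogonal_precomplement_eq_neg
    (Submodule.mem_span_singleton.2 ⟨s, rfl⟩)

lemma hyperplaneReflection_involutive : (hyperplaneReflection e m).Involutive := by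
  intro y
  simp only [hyperplaneReflection, LinearIsometryEquiv.map_add, reflection_orthogonal_span_smul,
    Submodule.reflection_reflection]
  abel

lemma norm_smul_sub_hyperplaneReflection (s : ℝ) (y : E) :
    ‖s • e - hyperplaneReflection e m y‖ = ‖(2 * m - s) • e - y‖ := by
  rw [← LinearIsometryEquiv.norm_map (ℝ ∙ e)ᗮ.reflection]
  simp only [hyperplaneReflection, map_sub, map_add, reflection_orthogonal_span_smul,
    Submodule.reflection_reflection, sub_smul]
  congr 1
  abel

lemma norm_hyperplaneReflection (y : E) :
    ‖hyperplaneReflection e m y‖ = ‖(2 * m) • e - y‖ := by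
  simpa using norm_smul_sub_hyperplaneReflection (e := e) (m := m) 0 y

/-- The integrand obtained by folding `y ↦ (‖r • e - y‖ ^ (-α) - ‖t • e - y‖ ^ (-α)) * f y`
along the hyperplane `⟪y, e⟫ = (r + t) / 2`, whose reflection exchanges `r • e` and `t • e`. -/
def foldedIntegrand (α : ℝ) (f : E → ℝ) (e : E) (r t : ℝ) (y : E) : ℝ :=
  (‖r • e - y‖ ^ (-α) - ‖t • e - y‖ ^ (-α)) * (f y - f (hyperplaneReflection e ((r + t) / 2) y))

lemma foldedIntegrand_eq_add (α : ℝ) (f : E → ℝ) (e : E) (r t : ℝ) (y : E) :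
    foldedIntegrand α f e r t y =
      (‖r • e - y‖ ^ (-α) - ‖t • e - y‖ ^ (-α)) * f y +
        (‖r • e - hyperplaneReflection e ((r + t) / 2) y‖ ^ (-α) -
          ‖t • e - hyperplaneReflection e ((r + t) / 2) y‖ ^ (-α)) *
          f (hyperplaneReflection e ((r + t) / 2) y) := by
  rw [foldedIntegrand, norm_smul_sub_hyperplaneReflection, norm_smul_sub_hyperplaneReflection,
    show 2 * ((r + t) / 2) - r = t by ring, show 2 * ((r + t) / 2) - t = r by ring]
  ring

lemma foldedIntegrand_hyperplaneReflection (y : E) :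
    foldedIntegrand α f e r t (hyperplaneReflection e ((r + t) / 2) y) =
      foldedIntegrand α f e r t y := by
  rw [foldedIntegrand, foldedIntegrand, hyperplaneReflection_involutive,
    norm_smul_sub_hyperplaneReflection, norm_smul_sub_hyperplaneReflection,
    show 2 * ((r + t) / 2) - r = t by ring, show 2 * ((r + t) / 2) - t = r by ring]
  ring

section UnitVector

variable (he : ‖e‖ = 1)
include he

lemma inner_self_of_norm_eq_one : ⟪e, e⟫ = 1 := by
  rw [real_inner_self_eq_norm_sq, he, one_pow]

lemma norm_smul_sub_sq (s : ℝ) (y : E) :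
    ‖s • e - y‖ ^ 2 = s ^ 2 - 2 * s * ⟪y, e⟫ + ‖y‖ ^ 2 := by
  rw [norm_sub_sq_real, norm_smul, he, real_inner_smul_left, real_inner_comm, Real.norm_eq_abs]
  rw [mul_pow, sq_abs, one_pow]
  ring

lemma sub_inner_le_norm_smul_sub (s : ℝ) (y : E) : s - ⟪y, e⟫ ≤ ‖s • e - y‖ := by
  have := real_inner_le_norm (s • e - y) e
  rwa [he, mul_one, inner_sub_left, real_inner_smul_left, inner_self_of_norm_eq_one he,
    mul_one] at this

lemma inner_hyperplaneReflection (y : E) :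
    ⟪hyperplaneReflection e m y, e⟫ = 2 * m - ⟪y, e⟫ := by
  have hrefl : ⟪(ℝ ∙ e)ᗮ.reflection y, e⟫ = -⟪y, e⟫ := by
    have hRe : (ℝ ∙ e)ᗮ.reflection e = -e := by
      simpa using reflection_orthogonal_span_smul (e := e) 1
    rw [← LinearIsometryEquiv.inner_map_map (ℝ ∙ e)ᗮ.reflection, Submodule.reflection_reflection,
      hRe, inner_neg_right]
  rw [hyperplaneReflection, inner_add_left, real_inner_smul_left, hrefl,
    inner_self_of_norm_eq_one he]
  ring

lemma norm_smul_sub_le_norm_smul_sub (hrt : r ≤ t) (hy : ⟪y, e⟫ ≤ (r + t) / 2) :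
    ‖r • e - y‖ ≤ ‖t • e - y‖ := by
  have hr := norm_smul_sub_sq he r y
  have ht := norm_smul_sub_sq he t y
  nlinarith [norm_nonneg (r • e - y), norm_nonneg (t • e - y)]

lemma norm_le_norm_hyperplaneReflection (hm : 0 ≤ m) (hy : ⟪y, e⟫ ≤ m) :
    ‖y‖ ≤ ‖hyperplaneReflection e m y‖ := by
  simpa [norm_hyperplaneReflection] using
    norm_smul_sub_le_norm_smul_sub he (r := 0) (t := 2 * m) (by linarith) (by linarith)

lemma le_rpow_neg_norm_smul_sub_sub_rpow_neg_norm_smul_sub (hα : 0 ≤ α) (hr : 0 ≤ r)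
    (hrt : r < t) (hy : ⟪y, e⟫ < 0) (hB : t + ‖y‖ ≤ B) :
    α / 2 * B ^ (-α - 2) * ((t - r) * (t + r)) ≤ ‖r • e - y‖ ^ (-α) - ‖t • e - y‖ ^ (-α) := by
  set a := ‖r • e - y‖
  set b := ‖t • e - y‖
  have ha : 0 < a := by linarith [sub_inner_le_norm_smul_sub he r y]
  have hab : a ≤ b := norm_smul_sub_le_norm_smul_sub he hrt.le (by linarith)
  have hbB : b ≤ B := by
    refine (norm_sub_le _ _).trans ?_
    rwa [norm_smul, he, mul_one, Real.norm_of_nonneg (by linarith)]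
  have hB0 : 0 < B := ha.trans_le (hab.trans hbB)
  have hsq : (b - a) * (a + b) = (t - r) * (t + r - 2 * ⟪y, e⟫) := by
    have := norm_smul_sub_sq he r y
    have := norm_smul_sub_sq he t y
    nlinarith
  have hgap : (t - r) * (t + r) / (2 * B) ≤ b - a := by
    rw [div_le_iff₀ (by positivity)]
    nlinarith [mul_le_mul_of_nonneg_left (show a + b ≤ 2 * B by linarith) (sub_nonneg.2 hab)]
  have hpow : B ^ (-α - 1) ≤ b ^ (-α - 1) :=
    Real.rpow_le_rpow_of_nonpos (ha.trans_le hab) hbB (by linarith)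
  calc α / 2 * B ^ (-α - 2) * ((t - r) * (t + r))
      = α * B ^ (-α - 1) * ((t - r) * (t + r) / (2 * B)) := by
        rw [show -α - 2 = -α - 1 - 1 by ring, Real.rpow_sub_one hB0.ne']
        field_simp
    _ ≤ α * b ^ (-α - 1) * (b - a) := by
        have : 0 ≤ (t - r) * (t + r) := mul_nonneg (by linarith) (by linarith)
        gcongr
    _ ≤ a ^ (-α) - b ^ (-α) := mul_rpow_mul_sub_le_rpow_neg_sub_rpow_neg hα ha hab

lemma norm_lt_of_mem_ball_smul (hδρ : δ ≤ ρ) (hy : y ∈ ball ((δ - ρ) • e) δ) : ‖y‖ < ρ := by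
  have hy' : ‖y - (δ - ρ) • e‖ < δ := mem_ball_iff_norm.1 hy
  calc ‖y‖ ≤ ‖(δ - ρ) • e‖ + ‖y - (δ - ρ) • e‖ := norm_le_norm_add_norm_sub' _ _
    _ < ρ := by
      rw [norm_smul, he, mul_one, Real.norm_of_nonpos (by linarith)]
      linarith

lemma inner_lt_of_mem_ball_smul (hy : y ∈ ball ((δ - ρ) • e) δ) : ⟪y, e⟫ < 2 * δ - ρ := by
  have hy' : ‖y - (δ - ρ) • e‖ < δ := mem_ball_iff_norm.1 hy
  have := real_inner_le_norm (y - (δ - ρ) • e) e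
  rw [he, mul_one, inner_sub_left, real_inner_smul_left, inner_self_of_norm_eq_one he] at this
  linarith

variable (hα : 0 ≤ α) (hfg : ∀ x, f x = g ‖x‖) (hg : AntitoneOn g (Ici 0)) (hr : 0 ≤ r)
  (hrt : r < t)
include hα hfg hg hr hrt

lemma foldedIntegrand_nonneg_of_inner_le (hy : ⟪y, e⟫ ≤ (r + t) / 2) (hyr : y ≠ r • e) :
    0 ≤ foldedIntegrand α f e r t y := by
  refine mul_nonneg (sub_nonneg.2 ?_) (sub_nonneg.2 ?_)
  · exact Real.rpow_le_rpow_of_nonpos (norm_pos_iff.2 (sub_ne_zero.2 hyr.symm))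
      (norm_smul_sub_le_norm_smul_sub he hrt.le hy) (by linarith)
  · rw [hfg, hfg]
    exact hg (norm_nonneg _) (norm_nonneg _)
      (norm_le_norm_hyperplaneReflection he (by linarith) hy)

-- `0 ^ (-α) = 0`: the kernel factor has the wrong sign at `y = r • e`, hence, by symmetry, so
-- does the folded integrand at `y = t • e`.
lemma foldedIntegrand_nonneg (hyr : y ≠ r • e) (hyt : y ≠ t • e) :
    0 ≤ foldedIntegrand α f e r t y := by
  rcases le_or_gt ⟪y, e⟫ ((r + t) / 2) with hy | hy
  · exact foldedIntegrand_nonneg_of_inner_le he hα hfg hg hr hrt hy hyr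
  · rw [← foldedIntegrand_hyperplaneReflection]
    refine foldedIntegrand_nonneg_of_inner_le he hα hfg hg hr hrt ?_ fun h => hyt ?_
    · rw [inner_hyperplaneReflection he]
      linarith
    · have := norm_smul_sub_hyperplaneReflection (e := e) (m := (r + t) / 2) r y
      rwa [h, sub_self, norm_zero, show 2 * ((r + t) / 2) - r = t by ring, eq_comm, norm_eq_zero,
        sub_eq_zero, eq_comm] at this

lemma le_foldedIntegrand_of_mem_ball (hδρ : 2 * δ ≤ ρ) (hh : 0 ≤ h) (hhδ : h + 2 * δ ≤ r + t)
    (hB : t + ρ ≤ B) (hy : y ∈ ball ((δ - ρ) • e) δ) :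
    α / 2 * B ^ (-α - 2) * ((t - r) * (t + r)) * (g ρ - g (ρ + h)) ≤
      foldedIntegrand α f e r t y := by
  have hδ : 0 < δ := pos_of_mem_ball hy
  have hnorm := norm_lt_of_mem_ball_smul he (by linarith) hy
  have hinner := inner_lt_of_mem_ball_smul he hy
  have hρ : 0 ≤ ρ := by linarith
  have hkernel := le_rpow_neg_norm_smul_sub_sub_rpow_neg_norm_smul_sub he hα hr hrt (y := y)
    (B := B) (by linarith) (by linarith)
  have hdrop : g ρ - g (ρ + h) ≤ f y - f (hyperplaneReflection e ((r + t) / 2) y) := by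
    have hfar : ρ + h ≤ ‖hyperplaneReflection e ((r + t) / 2) y‖ := by
      have := sub_inner_le_norm_smul_sub he (r + t) y
      rw [norm_hyperplaneReflection, show 2 * ((r + t) / 2) = r + t by ring]
      linarith
    rw [hfg, hfg]
    have := hg (norm_nonneg y) hρ hnorm.le
    have := hg (by simp; linarith) (norm_nonneg _) hfar
    linarith
  have hdrop0 : 0 ≤ g ρ - g (ρ + h) := sub_nonneg.2 (hg hρ (by simp; linarith) (by linarith))
  have hκ : 0 ≤ α / 2 * B ^ (-α - 2) * ((t - r) * (t + r)) :=
    mul_nonneg (mul_nonneg (by positivity) (Real.rpow_nonneg (by linarith) _))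
      (mul_nonneg (by linarith) (by linarith))
  exact mul_le_mul hkernel hdrop hdrop0 (hκ.trans hkernel)

end UnitVector

section Measure

variable [MeasurableSpace E] [BorelSpace E]

lemma measurableEmbedding_hyperplaneReflection :
    MeasurableEmbedding (hyperplaneReflection e m) :=
  (Homeomorph.addLeft ((2 * m) • e)).measurableEmbedding.comp
    (ℝ ∙ e)ᗮ.reflection.toHomeomorph.measurableEmbedding

variable [FiniteDimensional ℝ E]

lemma measurePreserving_hyperplaneReflection : MeasurePreserving (hyperplaneReflection e m) :=
  (measurePreserving_add_left volume ((2 * m) • e)).comp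
    (ℝ ∙ e)ᗮ.reflection.measurePreserving

lemma integrable_comp_hyperplaneReflection_iff {F : E → ℝ} :
    Integrable (fun y => F (hyperplaneReflection e m y)) ↔ Integrable F :=
  measurePreserving_hyperplaneReflection.integrable_comp_emb
    measurableEmbedding_hyperplaneReflection

lemma integral_comp_hyperplaneReflection (F : E → ℝ) :
    ∫ y, F (hyperplaneReflection e m y) = ∫ y, F y :=
  measurePreserving_hyperplaneReflection.integral_comp measurableEmbedding_hyperplaneReflection F

lemma ae_foldedIntegrand_nonneg [Nontrivial E] (he : ‖e‖ = 1) (hα : 0 ≤ α)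
    (hfg : ∀ x, f x = g ‖x‖) (hg : AntitoneOn g (Ici 0)) (hr : 0 ≤ r) (hrt : r < t) :
    0 ≤ᵐ[volume] foldedIntegrand α f e r t := by
  filter_upwards [volume.ae_ne (r • e), volume.ae_ne (t • e)] with y hyr hyt
  exact foldedIntegrand_nonneg he hα hfg hg hr hrt hyr hyt

end Measure

end InnerProductSpace

section Euclidean

variable {d : ℕ} {α ε₀ r t D : ℝ} {f : Euc d → ℝ} {g : ℝ → ℝ} {e : Euc d}

lemma integrable_foldedIntegrand_and_integral_eq
    (hint : ∀ x : Euc d, Integrable (fun y => ‖x - y‖ ^ (-α) * f y)) :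
    Integrable (foldedIntegrand α f e r t) ∧
      ∫ y, foldedIntegrand α f e r t y =
        2 * (rieszConv d α f (r • e) - rieszConv d α f (t • e)) := by
  set F : Euc d → ℝ := fun y => (‖r • e - y‖ ^ (-α) - ‖t • e - y‖ ^ (-α)) * f y
  have hF : Integrable F :=
    ((hint (r • e)).sub (hint (t • e))).congr (ae_of_all _ fun y => (sub_mul _ _ _).symm)
  have hFT : Integrable (fun y => F (hyperplaneReflection e ((r + t) / 2) y)) :=
    integrable_comp_hyperplaneReflection_iff.2 hF
  have hW : foldedIntegrand α f e r t =
      fun y => F y + F (hyperplaneReflection e ((r + t) / 2) y) :=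
    funext (foldedIntegrand_eq_add α f e r t)
  refine ⟨hW ▸ hF.add hFT, ?_⟩
  rw [hW, integral_add hF hFT, integral_comp_hyperplaneReflection, two_mul, rieszConv, rieszConv,
    ← integral_sub (hint _) (hint _)]
  simp only [F, sub_mul]

lemma volume_real_ball_eq [NeZero d] (x : Euc d) {δ : ℝ} (hδ : 0 ≤ δ) :
    volume.real (ball x δ) = δ ^ d * volume.real (ball (0 : Euc d) 1) := by
  rw [← Measure.addHaar_real_closedBall_eq_addHaar_real_ball,
    Measure.addHaar_real_closedBall _ _ hδ, finrank_euclideanSpace_fin]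

lemma pairwise_disjoint_ball_smul (he : ‖e‖ = 1) {ρ₀ a δ : ℝ} (hδ : 2 * δ ≤ a) :
    Pairwise (Function.onFun Disjoint fun k : ℕ => ball ((δ - (ρ₀ + a * k)) • e) δ) := by
  intro j k hjk
  refine ball_disjoint_ball ?_
  have hjk' : (1 : ℝ) ≤ |(j : ℝ) - k| := by
    exact_mod_cast Int.one_le_abs (sub_ne_zero.2 (by exact_mod_cast hjk : (j : ℤ) ≠ k))
  rw [dist_eq_norm, ← sub_smul, norm_smul, he, mul_one, Real.norm_eq_abs,
    show δ - (ρ₀ + a * j) - (δ - (ρ₀ + a * k)) = a * (k - j) by ring, abs_mul, abs_sub_comm]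
  nlinarith [abs_nonneg a, le_abs_self a]

lemma mul_le_integral_foldedIntegrand [NeZero d] (he : ‖e‖ = 1) (hα : 0 ≤ α)
    (hfg : ∀ x, f x = g ‖x‖) (hg : AntitoneOn g (Ici 0))
    (hint : ∀ x : Euc d, Integrable (fun y => ‖x - y‖ ^ (-α) * f y))
    (N : ℕ) (hr : 0 < r) (hrt : r < t) (ht : t ≤ 2 * r) :
    α / 2 * ((3 + 2 * N) * r) ^ (-α - 2) * ((t - r) * (t + r)) *
        (g (2 / 3 * r) - g (2 / 3 * r + 3 / 2 * r * N)) *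
        ((r / 4) ^ d * volume.real (ball (0 : Euc d) 1)) ≤
      ∫ y, foldedIntegrand α f e r t y := by
  set s : ℕ → ℝ := fun k => 2 / 3 * r + 3 / 2 * r * k with hs
  have hbound : ∀ k < N, ∀ y ∈ ball ((r / 4 - s k) • e) (r / 4),
      α / 2 * ((3 + 2 * N) * r) ^ (-α - 2) * ((t - r) * (t + r)) * (g (s k) - g (s (k + 1))) ≤
        foldedIntegrand α f e r t y := by
    intro k hk y hy
    have hkN : (k : ℝ) ≤ N := by exact_mod_cast hk.le
    rw [show s (k + 1) = s k + 3 / 2 * r by simp only [hs]; push_cast; ring]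
    exact le_foldedIntegrand_of_mem_ball he hα hfg hg hr.le hrt (by simp only [hs]; nlinarith)
      (by linarith) (by linarith) (by simp only [hs]; nlinarith) hy
  have hsum := sum_mul_measureReal_le_integral
    (integrable_foldedIntegrand_and_integral_eq (e := e) (r := r) (t := t) hint).1
    (ae_foldedIntegrand_nonneg he hα hfg hg hr.le hrt) (fun _ => measurableSet_ball)
    (fun _ => measure_ball_lt_top.ne) (pairwise_disjoint_ball_smul he (by linarith)) hbound
  simp only [volume_real_ball_eq _ (by positivity : 0 ≤ r / 4), ← Finset.sum_mul,
    ← Finset.mul_sum, Finset.sum_range_sub' (fun k => g (s k))] at hsum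
  simpa [hs] using hsum

lemma mul_le_rieszConv_sub [NeZero d] (he : ‖e‖ = 1) (hα : 0 ≤ α) (hfg : ∀ x, f x = g ‖x‖)
    (hg : AntitoneOn g (Ici 0)) (hint : ∀ x : Euc d, Integrable (fun y => ‖x - y‖ ^ (-α) * f y))
    (N : ℕ) (hr : 0 < r) (hrt : r < t) (ht : t ≤ 2 * r) :
    (t - r) * (α / 2 * (3 + 2 * N : ℝ) ^ (-α - 2) / 4 ^ d * volume.real (ball (0 : Euc d) 1) *
        ((g (2 / 3 * r) - g (2 / 3 * r + 3 / 2 * r * N)) * r ^ ((d : ℝ) - 1 - α))) ≤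
      rieszConv d α f (r • e) - rieszConv d α f (t • e) := by
  set C : ℝ := 3 + 2 * N
  set V : ℝ := volume.real (ball (0 : Euc d) 1)
  set Δ : ℝ := g (2 / 3 * r) - g (2 / 3 * r + 3 / 2 * r * N)
  have hΔ : 0 ≤ Δ := sub_nonneg.2 (hg (show 0 ≤ 2 / 3 * r by positivity)
    (show 0 ≤ 2 / 3 * r + 3 / 2 * r * N by positivity) (by simp; positivity))
  have hbound := mul_le_integral_foldedIntegrand he hα hfg hg hint N hr hrt ht
  rw [(integrable_foldedIntegrand_and_integral_eq hint).2] at hbound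
  have hrpow : (C * r) ^ (-α - 2) * r * (r / 4) ^ d =
      C ^ (-α - 2) / 4 ^ d * r ^ ((d : ℝ) - 1 - α) := by
    rw [Real.mul_rpow (by positivity) hr.le, div_pow, show (d : ℝ) - 1 - α = -α - 2 + 1 + d by ring,
      Real.rpow_add hr, Real.rpow_add hr, Real.rpow_one, Real.rpow_natCast]
    ring
  -- `t + r ≥ 2 r` is the only loss.
  have hslack : 0 ≤ α / 2 * (C * r) ^ (-α - 2) * (t - r) * (t - r) * Δ * ((r / 4) ^ d * V) :=
    mul_nonneg (mul_nonneg (mul_nonneg (mul_nonneg (by positivity) (by linarith)) (by linarith)) hΔ)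
      (by positivity)
  calc (t - r) * (α / 2 * C ^ (-α - 2) / 4 ^ d * V * (Δ * r ^ ((d : ℝ) - 1 - α)))
      = α / 2 * ((C * r) ^ (-α - 2) * r * (r / 4) ^ d) * (t - r) * Δ * V := by
        rw [hrpow]; ring
    _ ≤ α / 2 * (C * r) ^ (-α - 2) * ((t - r) * (t + r)) * Δ * ((r / 4) ^ d * V) / 2 := by
        linear_combination hslack / 2
    _ ≤ rieszConv d α f (r • e) - rieszConv d α f (t • e) := by linarith

lemma mul_le_neg_deriv_rieszConv [NeZero d] (he : ‖e‖ = 1) (hα : 0 ≤ α)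
    (hfg : ∀ x, f x = g ‖x‖) (hg : AntitoneOn g (Ici 0))
    (hint : ∀ x : Euc d, Integrable (fun y => ‖x - y‖ ^ (-α) * f y))
    {N : ℕ} (hε₀ : 0 < ε₀) (hN : 1 ≤ N * ε₀) (hr : 0 < r)
    (hD : HasDerivAt (fun t : ℝ => rieszConv d α f (t • e)) D r) :
    α / 2 * (3 + 2 * N : ℝ) ^ (-α - 2) / 4 ^ d * volume.real (ball (0 : Euc d) 1) *
      ((g (2 / 3 * r) - g (r / (2 * ε₀))) * r ^ ((d : ℝ) - 1 - α)) ≤ -D := by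
  refine le_neg_of_hasDerivAt_of_eventually hD ?_
  filter_upwards [Ioc_mem_nhdsGT (by linarith : r < 2 * r)] with t ⟨hrt, ht⟩
  refine le_trans ?_ (mul_le_rieszConv_sub he hα hfg hg hint N hr hrt ht)
  have hfar : r / (2 * ε₀) ≤ 2 / 3 * r + 3 / 2 * r * N := by
    rw [div_le_iff₀ (by positivity)]
    nlinarith
  have hgN : g (2 / 3 * r + 3 / 2 * r * N) ≤ g (r / (2 * ε₀)) :=
    hg (show 0 ≤ r / (2 * ε₀) by positivity) (show 0 ≤ 2 / 3 * r + 3 / 2 * r * N by positivity)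
      hfar
  gcongr

lemma exists_pos_forall_mul_le_neg_deriv_rieszConv [NeZero d] {α₀ α₁ ε₁ : ℝ} (hα₀ : 0 < α₀)
    (hε₁ : 0 < ε₁) : ∃ c : ℝ, 0 < c ∧ ∀ α ε₀ : ℝ, α₀ ≤ α → α ≤ α₁ → ε₁ ≤ ε₀ → ε₀ ≤ 1 / 4 →
      ∀ f : Euc d → ℝ, ∀ g : ℝ → ℝ, (∀ x, f x = g ‖x‖) → AntitoneOn g (Ici 0) →
      (∀ x : Euc d, Integrable (fun y => ‖x - y‖ ^ (-α) * f y)) →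
      ∀ e : Euc d, ‖e‖ = 1 → ∀ r : ℝ, 0 < r → ∀ D : ℝ,
        HasDerivAt (fun t : ℝ => rieszConv d α f (t • e)) D r →
          c * ((g (2 / 3 * r) - g (r / (2 * ε₀))) * r ^ ((d : ℝ) - 1 - α)) ≤ -D := by
  set N : ℕ := ⌈ε₁⁻¹⌉₊
  set C : ℝ := 3 + 2 * N
  have hC : 1 ≤ C := by simp only [C]; linarith [N.cast_nonneg (α := ℝ)]
  have hC0 : 0 < C := by linarith
  have hV : 0 < volume.real (ball (0 : Euc d) 1) :=
    ENNReal.toReal_pos (measure_ball_pos volume _ one_pos).ne' measure_ball_lt_top.ne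
  refine ⟨α₀ / 2 * C ^ (-α₁ - 2) / 4 ^ d * volume.real (ball (0 : Euc d) 1), by positivity, ?_⟩
  intro α ε₀ hα₀α hαα₁ hε₁ε₀ hε₀ f g hfg hg hint e he r hr D hD
  have hα : 0 < α := hα₀.trans_le hα₀α
  have hε₀_pos : 0 < ε₀ := hε₁.trans_le hε₁ε₀
  have hN : 1 ≤ N * ε₀ :=
    calc 1 = ε₁⁻¹ * ε₁ := (inv_mul_cancel₀ hε₁.ne').symm
      _ ≤ N * ε₀ := mul_le_mul (Nat.le_ceil _) hε₁ε₀ hε₁.le (Nat.cast_nonneg _)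
  have hdrop : 0 ≤ g (2 / 3 * r) - g (r / (2 * ε₀)) := by
    refine sub_nonneg.2 (hg (show 0 ≤ 2 / 3 * r by positivity)
      (show 0 ≤ r / (2 * ε₀) by positivity) ?_)
    rw [le_div_iff₀ (by linarith)]
    nlinarith
  refine le_trans ?_ (mul_le_neg_deriv_rieszConv he hα.le hfg hg hint hε₀_pos hN hr hD)
  gcongr

lemma rieszConv_smul_lt_rieszConv_smul [NeZero d] (he : ‖e‖ = 1) (hα : 0 < α)
    (hf : Continuous f) (hf0 : ∀ x, 0 ≤ f x) (hfg : ∀ x, f x = g ‖x‖) (hg : AntitoneOn g (Ici 0))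
    (hint : ∀ x : Euc d, Integrable (fun y => ‖x - y‖ ^ (-α) * f y))
    (hg0 : Tendsto g atTop (𝓝 0)) (hne : ∃ x, f x ≠ 0) (hr : 0 ≤ r) (hrt : r < t) :
    rieszConv d α f (t • e) < rieszConv d α f (r • e) := by
  obtain ⟨s₀, hs₀, hgs₀⟩ := exists_pos_radius_pos hf hf0 hfg hne
  have hh : 0 < (r + t) / 2 := by linarith
  obtain ⟨ρ, hρ, hdrop⟩ := exists_lt_of_tendsto_atTop_zero hg0 hgs₀ hh
  obtain ⟨δ, hδ, hδρ, hδh⟩ : ∃ δ, 0 < δ ∧ 2 * δ ≤ ρ ∧ 2 * δ ≤ (r + t) / 2 :=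
    ⟨min ρ ((r + t) / 2) / 2, half_pos (lt_min (hs₀.trans_le hρ) hh),
      by linarith [min_le_left ρ ((r + t) / 2)], by linarith [min_le_right ρ ((r + t) / 2)]⟩
  have hκ : 0 < α / 2 * (t + ρ) ^ (-α - 2) * ((t - r) * (t + r)) :=
    mul_pos (mul_pos (half_pos hα) (Real.rpow_pos_of_pos (by linarith) _))
      (mul_pos (by linarith) (by linarith))
  have hV : 0 < volume.real (ball ((δ - ρ) • e) δ) :=
    ENNReal.toReal_pos (measure_ball_pos _ _ hδ).ne' measure_ball_lt_top.ne
  obtain ⟨hWi, hWeq⟩ := integrable_foldedIntegrand_and_integral_eq (e := e) (r := r) (t := t) hint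
  have hbound : ∀ y ∈ ball ((δ - ρ) • e) δ,
      α / 2 * (t + ρ) ^ (-α - 2) * ((t - r) * (t + r)) * (g ρ - g (ρ + (r + t) / 2)) ≤
        foldedIntegrand α f e r t y :=
    fun y hy => le_foldedIntegrand_of_mem_ball he hα.le hfg hg hr hrt hδρ hh.le (by linarith)
      le_rfl hy
  have hball := (setIntegral_ge_of_const_le_real measurableSet_ball measure_ball_lt_top.ne hbound
    hWi.integrableOn).trans
      (setIntegral_le_integral hWi (ae_foldedIntegrand_nonneg he hα.le hfg hg hr hrt))
  have hpos := mul_pos (mul_pos hκ (sub_pos.2 hdrop)) hV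
  linarith

lemma rieszConv_eq_of_norm_eq (hfg : ∀ x, f x = g ‖x‖) {x z : Euc d} (hxz : ‖x‖ = ‖z‖) :
    rieszConv d α f x = rieszConv d α f z := by
  let Q : Euc d ≃ₗᵢ[ℝ] Euc d := (ℝ ∙ (x - z))ᗮ.reflection
  have hQ : Q x = z := Submodule.reflection_sub hxz
  have hz : rieszConv d α f z = ∫ y, ‖z - Q y‖ ^ (-α) * f (Q y) :=
    (Q.measurePreserving.integral_comp Q.toHomeomorph.measurableEmbedding _).symm
  rw [hz, rieszConv]
  congr 1 with y
  rw [← hQ, ← Q.map_sub, Q.norm_map, hfg (Q y), Q.norm_map, ← hfg y]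

end Euclidean

end RieszPotential

theorem stmt6 (d : ℕ) (hd : 1 ≤ d) :
    -- main part: lower bound on the (negative) radial derivative, uniformly for
    -- (α, ε₀) in a compact subset of (0, d) × (0, 1/4]
    (∀ K : Set (ℝ × ℝ), IsCompact K → K ⊆ Ioo (0 : ℝ) (d : ℝ) ×ˢ Ioc (0 : ℝ) (1 / 4 : ℝ) →
      ∃ c : ℝ, 0 < c ∧
        ∀ α ε₀ : ℝ, (α, ε₀) ∈ K →
          ∀ f : Euc d → ℝ, ∀ g : ℝ → ℝ,
            ContDiff ℝ 1 f → (∀ x, 0 ≤ f x) → (∀ x : Euc d, f x = g ‖x‖) →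
            AntitoneOn g (Ici (0 : ℝ)) →
            (∀ x : Euc d, Integrable (fun y : Euc d => ‖x - y‖ ^ (-α) * f y)
              (volume : Measure (Euc d))) →
            ∀ e : Euc d, ‖e‖ = 1 →
              ∀ r : ℝ, 0 < r → ∀ D : ℝ,
                HasDerivAt (fun t : ℝ => rieszConv d α f (t • e)) D r →
                  c * ((g (2 / 3 * r) - g (r / (2 * ε₀))) * r ^ ((d : ℝ) - 1 - α)) ≤ -D) ∧
    -- in particular: if f vanishes at infinity and is nontrivial, the Riesz potential
    -- is strictly radially decreasing
    (∀ α : ℝ, α ∈ Ioo (0 : ℝ) (d : ℝ) →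
      ∀ f : Euc d → ℝ, ∀ g : ℝ → ℝ,
        ContDiff ℝ 1 f → (∀ x, 0 ≤ f x) → (∀ x : Euc d, f x = g ‖x‖) →
        AntitoneOn g (Ici (0 : ℝ)) →
        (∀ x : Euc d, Integrable (fun y : Euc d => ‖x - y‖ ^ (-α) * f y)
          (volume : Measure (Euc d))) →
        Tendsto g atTop (nhds 0) → (∃ x, f x ≠ 0) →
          ∀ x y : Euc d, ‖x‖ < ‖y‖ → rieszConv d α f y < rieszConv d α f x) := by
  have : NeZero d := ⟨by omega⟩
  refine ⟨fun K hK hKsub => ?_, fun α hα f g hf hf0 hfg hg hint hg0 hne x y hxy => ?_⟩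
  · obtain ⟨α₀, hα₀, hα₀K⟩ := hK.exists_forall_le' continuous_fst.continuousOn
      fun p hp => (hKsub hp).1.1
    obtain ⟨ε₁, hε₁, hε₁K⟩ := hK.exists_forall_le' continuous_snd.continuousOn
      fun p hp => (hKsub hp).2.1
    obtain ⟨α₁, hα₁K⟩ := (hK.image continuous_fst).bddAbove
    obtain ⟨c, hc, hbound⟩ :=
      RieszPotential.exists_pos_forall_mul_le_neg_deriv_rieszConv (d := d) (α₁ := α₁) hα₀ hε₁
    exact ⟨c, hc, fun α ε₀ hp f g _ _ hfg hg hint => hbound α ε₀ (hα₀K _ hp)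
      (hα₁K (mem_image_of_mem _ hp)) (hε₁K _ hp) (hKsub hp).2.2 f g hfg hg hint⟩
  · set e : Euc d := EuclideanSpace.single ⟨0, hd⟩ 1
    have he : ‖e‖ = 1 := by simp [e]
    have hnorm (z : Euc d) : ‖‖z‖ • e‖ = ‖z‖ := by simp [norm_smul, he]
    rw [RieszPotential.rieszConv_eq_of_norm_eq hfg (hnorm x).symm,
      RieszPotential.rieszConv_eq_of_norm_eq hfg (hnorm y).symm]
    exact RieszPotential.rieszConv_smul_lt_rieszConv_smul he hα.1 hf.continuous hf0 hfg hg hint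
      hg0 hne (norm_nonneg x) hxy
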